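/- The point P₂ = (0,0) and the point Q₂ = (1/2, 1/2) are exactly the common zeros of Z(ε,ρ) = (1+ε−ρ)(4ε²+(1−2ρ)²−4) + 3 and W(ε,ρ) = 4(ε−ρ)(4ε²+(1−2ρ)²); i.e., Z(ε,ρ) = 0 and W(ε,ρ) = 0 hold simultaneously if and only if (ε,ρ) ∈ {(0,0), (1/2,1/2)}. -/
import Mathlib


def Z (ε ρ : ℝ) : ℝ := (1 + ε - ρ) * (4*ε^2 + (1-2*ρ)^2 - 4) + 3
def W (ε ρ : ℝ) : ℝ := 4*(ε - ρ) * (4*ε^2 + (1-2*ρ)^2)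

theorem stmt_15 (ε ρ : ℝ) :
    (Z ε ρ = 0 ∧ W ε ρ = 0) ↔
    ((ε = 0 ∧ ρ = 0) ∨ (ε = 1/2 ∧ ρ = 1/2)) := by
  simp only [Z, W]
  constructor
  · rintro ⟨hZ, hW⟩
    rcases mul_eq_zero.1 hW with h | h
    · have hep : ε = ρ := by nlinarith
      subst hep
      have h4 : 4 * ε * (2 * ε - 1) = 0 := by nlinarith
      rcases mul_eq_zero.1 h4 with h' | h'
      · left
        have : ε = 0 := by linarith
        exact ⟨this, this⟩
      · right
        constructor <;> linarith
    · have he : ε = 0 := by nlinarith [sq_nonneg ε, sq_nonneg (1 - 2*ρ)]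
      have hr : ρ = 1/2 := by nlinarith [sq_nonneg ε, sq_nonneg (1 - 2*ρ)]
      subst he; subst hr
      norm_num at hZ
  · rintro (⟨h1, h2⟩ | ⟨h1, h2⟩) <;> subst h1 <;> subst h2 <;> norm_num
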